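/- Let Z be a complex Banach space, B ∈ B(Z), and let G be a nonempty open subset of ℂ. Assume there exist a sequence {G(n)} of open subsets of ℂ and a sequence {M(n)} of closed subspaces of Z invariant under B such that closure(G(n)) ⊆ G(n+1), G = ⋃_n G(n), σ(B|M(n)) ⊆ ℂ∖G(n), and σ(B/M(n)) ⊆ closure(G(n)) for all n. Let m be a positive integer, λ ∈ G(m), and let {z*_n} be a sequence in Z* with ‖(λ−B*)z*_n‖ → 0 as n → ∞. Then there exists a sequence {z̃*_n} in the annihilator M(m)^⊥ such that ‖z*_n − z̃*_n‖ → 0 as n → ∞. -/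

import Mathlib

/-!
Write `M = M(m)`. As `λ ∉ σ(B|M)`, the resolvent `R` of `B|M` at `λ` exists, and for `x ∈ M`
`z*(x) = z*((λ - B) R x) = ((λ - B*) z*)(R x)`, so `‖z*|M‖ ≤ ‖R‖ ‖(λ - B*) z*‖`.
By Hahn–Banach, `z*|M` extends to some `g` of the same norm, and `z* - g ∈ M^⊥` lies at
distance `‖z*|M‖` from `z*`.
-/

open NormedSpace Filter Topology Set

noncomputable section

/-- The Banach-space adjoint (dual map) of a bounded operator:
`(dualOp q) g = g ∘ q`. -/
noncomputable def dualOp {E F : Type*} [NormedAddCommGroup E] [NormedSpace ℂ E]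
    [NormedAddCommGroup F] [NormedSpace ℂ F] (q : E →L[ℂ] F) :
    StrongDual ℂ F →L[ℂ] StrongDual ℂ E :=
  (ContinuousLinearMap.compL ℂ E F ℂ).flip q

/-- The restriction of an operator to an invariant subspace. -/
noncomputable def restrictOp {Z : Type*} [NormedAddCommGroup Z] [NormedSpace ℂ Z]
    (B : Z →L[ℂ] Z) (M : Submodule ℂ Z) (h : ∀ z ∈ M, B z ∈ M) : M →L[ℂ] M :=
  (B.comp M.subtypeL).codRestrict M (fun x => h x x.2)

/-- The operator induced on the quotient space by an invariant subspace:
`quotOp B M h (z + M) = B z + M`. -/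
noncomputable def quotOp {Z : Type*} [NormedAddCommGroup Z] [NormedSpace ℂ Z]
    (B : Z →L[ℂ] Z) (M : Submodule ℂ Z) (h : ∀ z ∈ M, B z ∈ M) :
    (Z ⧸ M) →L[ℂ] (Z ⧸ M) where
  __ := M.mapQ M B.toLinearMap h
  cont := by
    have h1 : (⇑(M.mapQ M B.toLinearMap h) ∘ ⇑M.mkQ) = ⇑M.mkQ ∘ ⇑B := by
      ext z; simp [Submodule.mapQ_apply]
    exact (Submodule.isOpenQuotientMap_mkQ M).isQuotientMap.continuous_iff.mpr
      (h1 ▸ ((Submodule.isOpenQuotientMap_mkQ M).continuous.comp B.continuous))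

/-- The annihilator `M^⊥` of a subspace `M ⊆ Z` in the continuous dual `Z*`. -/
def annihilator {Z : Type*} [NormedAddCommGroup Z] [NormedSpace ℂ Z]
    (M : Submodule ℂ Z) : Submodule ℂ (StrongDual ℂ Z) where
  carrier := {g : StrongDual ℂ Z | ∀ z ∈ M, g z = 0}
  add_mem' := by intro a b ha hb z hz; simp [ha z hz, hb z hz]
  zero_mem' := by intro z hz; simp
  smul_mem' := by intro c g hg z hz; simp [hg z hz]

section

variable {Z : Type*} [NormedAddCommGroup Z] [NormedSpace ℂ Z]

theorem dualOp_apply {E F : Type*} [NormedAddCommGroup E] [NormedSpace ℂ E]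
    [NormedAddCommGroup F] [NormedSpace ℂ F] (q : E →L[ℂ] F) (g : StrongDual ℂ F) (x : E) :
    dualOp q g x = g (q x) :=
  rfl

theorem coe_restrictOp_apply (B : Z →L[ℂ] Z) (M : Submodule ℂ Z) (h : ∀ z ∈ M, B z ∈ M)
    (x : M) : (restrictOp B M h x : Z) = B x :=
  rfl

theorem exists_mem_annihilator_norm_sub_eq (M : Submodule ℂ Z) (f : StrongDual ℂ Z) :
    ∃ w ∈ annihilator M, ‖f - w‖ = ‖f.comp M.subtypeL‖ := by
  obtain ⟨g, hg, hgnorm⟩ := exists_extension_norm_eq M (f.comp M.subtypeL)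
  refine ⟨f - g, fun z hz => ?_, by rw [sub_sub_cancel, hgnorm]⟩
  simpa [sub_eq_zero] using (hg ⟨z, hz⟩).symm

theorem apply_eq_sub_dualOp_apply_resolvent {B : Z →L[ℂ] Z} {M : Submodule ℂ Z}
    {h : ∀ z ∈ M, B z ∈ M} {lam : ℂ} (hlam : lam ∉ spectrum ℂ (restrictOp B M h))
    (f : StrongDual ℂ Z) (x : M) :
    f x = (lam • f - dualOp B f) (resolvent (restrictOp B M h) lam x : M) := by
  have hinv :
      (algebraMap ℂ _ lam - restrictOp B M h) * resolvent (restrictOp B M h) lam = 1 := by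
    have hunit := spectrum.notMem_iff.mp hlam
    rw [spectrum.resolvent_eq hunit]
    exact hunit.mul_val_inv
  have hx := DFunLike.congr_fun hinv x
  rw [one_apply_eq_self] at hx
  conv_lhs => rw [← hx]
  simp [dualOp_apply, coe_restrictOp_apply, Algebra.algebraMap_eq_smul_one]

theorem norm_comp_subtypeL_le_norm_resolvent_mul {B : Z →L[ℂ] Z} {M : Submodule ℂ Z}
    {h : ∀ z ∈ M, B z ∈ M} {lam : ℂ} (hlam : lam ∉ spectrum ℂ (restrictOp B M h))
    (f : StrongDual ℂ Z) :
    ‖f.comp M.subtypeL‖ ≤ ‖resolvent (restrictOp B M h) lam‖ * ‖lam • f - dualOp B f‖ := by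
  set R := resolvent (restrictOp B M h) lam
  refine ContinuousLinearMap.opNorm_le_bound _ (by positivity) fun x => ?_
  calc ‖f x‖ = ‖(lam • f - dualOp B f) (R x : M)‖ := by
        rw [apply_eq_sub_dualOp_apply_resolvent hlam]
    _ ≤ ‖lam • f - dualOp B f‖ * ‖R x‖ := (lam • f - dualOp B f).le_opNorm _
    _ ≤ ‖lam • f - dualOp B f‖ * (‖R‖ * ‖x‖) := by gcongr; exact R.le_opNorm x
    _ = ‖R‖ * ‖lam • f - dualOp B f‖ * ‖x‖ := by ring

end

theorem approximate_annihilator_correction_general {Z : Type*}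
    [NormedAddCommGroup Z] [NormedSpace ℂ Z]
    (B : Z →L[ℂ] Z)
    (Gs : ℕ → Set ℂ) (Ms : ℕ → Submodule ℂ Z)
    (hMsinv : ∀ n, ∀ z ∈ Ms n, B z ∈ Ms n)
    (hres : ∀ n, spectrum ℂ (restrictOp B (Ms n) (hMsinv n)) ⊆ (Gs n)ᶜ)
    (m : ℕ) (lam : ℂ) (hlam : lam ∈ Gs m)
    (zs : ℕ → StrongDual ℂ Z)
    (hzs : Tendsto (fun n => ‖lam • zs n - dualOp B (zs n)‖) atTop (𝓝 0)) :
    ∃ ws : ℕ → StrongDual ℂ Z,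
      (∀ n, ws n ∈ annihilator (Ms m)) ∧
      Tendsto (fun n => ‖zs n - ws n‖) atTop (𝓝 0) := by
  have hlam_resolvent : lam ∉ spectrum ℂ (restrictOp B (Ms m) (hMsinv m)) :=
    fun h => hres m h hlam
  choose ws hws hdist using fun n => exists_mem_annihilator_norm_sub_eq (Ms m) (zs n)
  have hbound n := (hdist n).trans_le
    (norm_comp_subtypeL_le_norm_resolvent_mul hlam_resolvent (zs n))
  refine ⟨ws, hws, squeeze_zero (fun n => norm_nonneg _) hbound ?_⟩
  simpa using hzs.const_mul ‖resolvent (restrictOp B (Ms m) (hMsinv m)) lam‖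

theorem approximate_annihilator_correction {Z : Type*}
    [NormedAddCommGroup Z] [NormedSpace ℂ Z] [CompleteSpace Z]
    (B : Z →L[ℂ] Z) (G : Set ℂ)
    (hGopen : IsOpen G) (hGne : G.Nonempty)
    (Gs : ℕ → Set ℂ) (Ms : ℕ → Submodule ℂ Z)
    (hGsopen : ∀ n, IsOpen (Gs n))
    (hMscl : ∀ n, IsClosed ((Ms n : Set Z)))
    (hMsinv : ∀ n, ∀ z ∈ Ms n, B z ∈ Ms n)
    (hGsmono : ∀ n, closure (Gs n) ⊆ Gs (n + 1))
    (hGunion : G = ⋃ n, Gs n)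
    (hres : ∀ n, spectrum ℂ (restrictOp B (Ms n) (hMsinv n)) ⊆ (Gs n)ᶜ)
    (hquo : ∀ n, spectrum ℂ (quotOp B (Ms n) (hMsinv n)) ⊆ closure (Gs n))
    (m : ℕ) (lam : ℂ) (hlam : lam ∈ Gs m)
    (zs : ℕ → StrongDual ℂ Z)
    (hzs : Tendsto (fun n => ‖lam • zs n - dualOp B (zs n)‖) atTop (𝓝 0)) :
    ∃ ws : ℕ → StrongDual ℂ Z,
      (∀ n, ws n ∈ annihilator (Ms m)) ∧
      Tendsto (fun n => ‖zs n - ws n‖) atTop (𝓝 0) :=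
  approximate_annihilator_correction_general B Gs Ms hMsinv hres m lam hlam zs hzs
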